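/- arXiv:1405.0697 — 2 statements merged into one kernel-verified Lean document; each statement's English description precedes it below -/
import Mathlib

section
/- Detailed fluctuation theorem: For a path x̂ with jumps x_{j-1}→x_j at times t_j under protocol α̂, define the path weight T^{α̂}[x̂] = (∏_{j=1}^n R^{α(t_j)}_{x_{j-1}→x_j}) · ∏_{j=0}^n exp(-∫_{t_j}^{t_{j+1}} λ^{α(t)}_{x_j} dt), where λ^α_x = Σ_{y≠x} R^α_{x→y} is the escape rate (t_0 = -τ, t_{n+1} = τ). Then the weight of the time-reversed path under the time-reversed protocol satisfies T^{α̂†}[x̂†] = exp(-Θ^{α̂}[x̂]) · T^{α̂}[x̂]. -/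
/-! Time reversal maps the `j`-th jump of the path to the `(n-1-j)`-th jump of the reversed path,
run backwards, and the `j`-th holding interval to the reflected `(n-j)`-th one. After reindexing by
`Fin.rev`, the survival factors agree by the substitution `s ↦ -s`, while every forward rate
`R x_{j-1} x_j` is replaced by the backward rate `R x_j x_{j-1}`; the ratio of the two products is
`exp (-Θ)`. -/

open Finset Real

section TimeReversal

variable {A S : Type*}

def escapeRate [Fintype S] [DecidableEq S] (R : A → S → S → ℝ) (a : A) (x : S) : ℝ :=
  ∑ y ∈ univ.filter (fun y => y ≠ x), R a x y

theorem prod_jump_rates_reverse {n : ℕ} (R : A → S → S → ℝ) (α αdag : ℝ → A)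
    (hαdag : ∀ s, αdag s = α (-s)) (x xdag : Fin (n + 1) → S) (hxdag : ∀ i, xdag i = x i.rev)
    (t tdag : Fin n → ℝ) (htdag : ∀ j, tdag j = -t j.rev) :
    ∏ j, R (αdag (tdag j)) (xdag j.castSucc) (xdag j.succ) =
      ∏ j, R (α (t j)) (x j.succ) (x j.castSucc) := by
  rw [← Equiv.prod_comp Fin.revPerm]
  refine prod_congr rfl fun j _ => ?_
  simp [hαdag, htdag, hxdag, Fin.rev_castSucc, Fin.rev_succ]

theorem integral_segment_reverse {m : ℕ} (ℓ ℓdag : ℝ → ℝ) (hℓ : ∀ s, ℓdag s = ℓ (-s))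
    (e edag : Fin (m + 1) → ℝ) (hedag : ∀ j, edag j = -e j.rev) (j : Fin m) :
    ∫ s in edag j.castSucc..edag j.succ, ℓdag s = ∫ s in e j.rev.castSucc..e j.rev.succ, ℓ s := by
  rw [hedag, hedag, Fin.rev_castSucc, Fin.rev_succ, ← intervalIntegral.integral_comp_neg]
  simp only [hℓ, neg_neg]

theorem prod_survival_reverse {m : ℕ} (ℓ ℓdag : ℝ → S → ℝ) (hℓ : ∀ s y, ℓdag s y = ℓ (-s) y)
    (x xdag : Fin m → S) (hxdag : ∀ i, xdag i = x i.rev)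
    (e edag : Fin (m + 1) → ℝ) (hedag : ∀ j, edag j = -e j.rev) :
    ∏ j, exp (-∫ s in edag j.castSucc..edag j.succ, ℓdag s (xdag j)) =
      ∏ j, exp (-∫ s in e j.castSucc..e j.succ, ℓ s (x j)) := by
  rw [← Equiv.prod_comp Fin.revPerm]
  refine prod_congr rfl fun j _ => ?_
  rw [integral_segment_reverse (ℓ · (x j)) _ (fun s => by simp [hℓ, hxdag]) e edag hedag]
  simp

end TimeReversal

theorem exp_neg_sum_log_div_mul_prod {ι : Type*} (s : Finset ι) {a b : ι → ℝ}
    (ha : ∀ i ∈ s, 0 < a i) (hb : ∀ i ∈ s, 0 < b i) :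
    exp (-∑ i ∈ s, log (a i / b i)) * ∏ i ∈ s, a i = ∏ i ∈ s, b i := by
  rw [← sum_neg_distrib, exp_sum, ← prod_mul_distrib]
  refine prod_congr rfl fun i hi => ?_
  rw [← log_inv, inv_div, exp_log (div_pos (hb i hi) (ha i hi)), div_mul_cancel₀ _ (ha i hi).ne']

theorem detailed_fluctuation_theorem_general {S A : Type*} [Fintype S] [DecidableEq S] (n : ℕ)
    (R : A → S → S → ℝ)
    (x : Fin (n+1) → S) (t : Fin n → ℝ)
    (te : Fin (n+2) → ℝ)
    (α : ℝ → A)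
    (hpos : ∀ j : Fin n, 0 < R (α (t j)) (x j.castSucc) (x j.succ))
    (hpos' : ∀ j : Fin n, 0 < R (α (t j)) (x j.succ) (x j.castSucc))
    (αdag : ℝ → A) (hαdag : ∀ s, αdag s = α (-s))
    (xdag : Fin (n+1) → S) (hxdag : ∀ i, xdag i = x i.rev)
    (tdag : Fin n → ℝ) (htdag : ∀ j, tdag j = - t j.rev)
    (tedag : Fin (n+2) → ℝ) (htedag : ∀ j, tedag j = - te j.rev) :
    (∏ j : Fin n, R (αdag (tdag j)) (xdag j.castSucc) (xdag j.succ)) *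
      ∏ j : Fin (n+1), Real.exp (-(∫ s in (tedag j.castSucc)..(tedag j.succ),
        ∑ y ∈ Finset.univ.filter (fun y => y ≠ xdag j), R (αdag s) (xdag j) y))
    = Real.exp (-(∑ j : Fin n, Real.log (R (α (t j)) (x j.castSucc) (x j.succ) /
        R (α (t j)) (x j.succ) (x j.castSucc)))) *
      ((∏ j : Fin n, R (α (t j)) (x j.castSucc) (x j.succ)) *
       ∏ j : Fin (n+1), Real.exp (-(∫ s in (te j.castSucc)..(te j.succ),
        ∑ y ∈ Finset.univ.filter (fun y => y ≠ x j), R (α s) (x j) y))) := by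
  have survival := prod_survival_reverse (fun s y => escapeRate R (α s) y)
    (fun s y => escapeRate R (αdag s) y) (fun s y => by rw [hαdag]) x xdag hxdag te tedag htedag
  rw [prod_jump_rates_reverse R α αdag hαdag x xdag hxdag t tdag htdag, ← mul_assoc,
    exp_neg_sum_log_div_mul_prod univ (fun j _ => hpos j) (fun j _ => hpos' j)]
  exact congrArg _ survival

/-- Detailed fluctuation theorem: the weight of the time-reversed path under the
time-reversed protocol equals `exp (-Θ)` times the weight of the original path. -/
theorem detailed_fluctuation_theorem {S A : Type*} [Fintype S] [DecidableEq S] (n : ℕ)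
    (R : A → S → S → ℝ) (τ : ℝ)
    (x : Fin (n+1) → S) (t : Fin n → ℝ)
    (hx : ∀ j : Fin n, x j.castSucc ≠ x j.succ)
    (htmono : StrictMono t)
    (te : Fin (n+2) → ℝ) (hte0 : te 0 = -τ) (htel : te (Fin.last (n+1)) = τ)
    (htei : ∀ j : Fin n, te j.succ.castSucc = t j)
    (α : ℝ → A)
    (hpos : ∀ j : Fin n, 0 < R (α (t j)) (x j.castSucc) (x j.succ))
    (hpos' : ∀ j : Fin n, 0 < R (α (t j)) (x j.succ) (x j.castSucc))
    (αdag : ℝ → A) (hαdag : ∀ s, αdag s = α (-s))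
    (xdag : Fin (n+1) → S) (hxdag : ∀ i, xdag i = x i.rev)
    (tdag : Fin n → ℝ) (htdag : ∀ j, tdag j = - t j.rev)
    (tedag : Fin (n+2) → ℝ) (htedag : ∀ j, tedag j = - te j.rev) :
    (∏ j : Fin n, R (αdag (tdag j)) (xdag j.castSucc) (xdag j.succ)) *
      ∏ j : Fin (n+1), Real.exp (-(∫ s in (tedag j.castSucc)..(tedag j.succ),
        ∑ y ∈ Finset.univ.filter (fun y => y ≠ xdag j), R (αdag s) (xdag j) y))
    = Real.exp (-(∑ j : Fin n, Real.log (R (α (t j)) (x j.castSucc) (x j.succ) /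
        R (α (t j)) (x j.succ) (x j.castSucc)))) *
      ((∏ j : Fin n, R (α (t j)) (x j.castSucc) (x j.succ)) *
       ∏ j : Fin (n+1), Real.exp (-(∫ s in (te j.castSucc)..(te j.succ),
        ∑ y ∈ Finset.univ.filter (fun y => y ≠ x j), R (α s) (x j) y))) :=
  detailed_fluctuation_theorem_general n R x t te α hpos hpos' αdag hαdag xdag hxdag tdag htdag
    tedag htedag
end

section
/- For the stationary distribution ρ^{(β₁,β₂)} of the toy heat-conduction model, the symmetrized Shannon entropy with respect to the velocity-reversal involution (j,v,k)* = (j,-v,k) equals S_sym[ρ^{(β₁,β₂)}] = ((β₁+β₂)/2)·((u(β₁)+u(β₂))/2) + (log Z(β₁) + log Z(β₂))/2 + log(2L), where u(β) = Z(β)^{-1} Σ_k u_k e^{-βu_k}. -/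
/-!
Every state `x` and its reversal `x*` have the same product `ρ x ρ x* = p_k q_k / (2L)²`, where
`p`, `q` are the Gibbs weights at `β₁`, `β₂`. Since `log (p_k q_k)` is affine in the energy `u_k`,
the symmetrized entropy is the `ρ`-average of an affine function of `u_k`, which the normalization
and mean energies of the two Gibbs weights evaluate in closed form.
-/

open Real Finset

noncomputable section

namespace ToyModel

section Gibbs

variable {ι : Type*} [Fintype ι] (u : ι → ℝ) (β : ℝ)

def partitionFunction : ℝ := ∑ k, exp (-β * u k)

def gibbs (k : ι) : ℝ := exp (-β * u k) / partitionFunction u β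

def meanEnergy : ℝ := (∑ k, u k * exp (-β * u k)) / partitionFunction u β

theorem partitionFunction_pos [Nonempty ι] : 0 < partitionFunction u β :=
  sum_pos (fun _ _ => exp_pos _) univ_nonempty

theorem gibbs_pos [Nonempty ι] (k : ι) : 0 < gibbs u β k :=
  div_pos (exp_pos _) (partitionFunction_pos u β)

theorem log_gibbs [Nonempty ι] (k : ι) :
    log (gibbs u β k) = -β * u k - log (partitionFunction u β) := by
  rw [gibbs, log_div (exp_ne_zero _) (partitionFunction_pos u β).ne', log_exp]

theorem sum_gibbs [Nonempty ι] : ∑ k, gibbs u β k = 1 := by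
  simp only [gibbs]
  rw [← sum_div, ← partitionFunction, div_self (partitionFunction_pos u β).ne']

theorem sum_mul_gibbs : ∑ k, u k * gibbs u β k = meanEnergy u β := by
  simp only [gibbs, meanEnergy, ← mul_div_assoc, ← sum_div]

theorem sum_gibbs_mul_affine [Nonempty ι] (a b : ℝ) :
    ∑ k, gibbs u β k * (a + b * u k) = a + b * meanEnergy u β := by
  have expand : ∀ k, gibbs u β k * (a + b * u k) = a * gibbs u β k + b * (u k * gibbs u β k) :=
    fun k => by ring
  simp only [expand, sum_add_distrib, ← mul_sum, sum_gibbs, sum_mul_gibbs, mul_one]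

end Gibbs

def symmetrizedEntropy {X : Type*} [Fintype X] (star : X → X) (ρ : X → ℝ) : ℝ :=
  -∑ x, ρ x * log (sqrt (ρ x * ρ (star x)))

theorem log_sqrt_mul_mul {c a b : ℝ} (hc : 0 < c) (ha : 0 < a) (hb : 0 < b) :
    log (sqrt (c * a * (c * b))) = log c + (log a + log b) / 2 := by
  rw [log_sqrt (by positivity), log_mul (by positivity) (by positivity),
    log_mul hc.ne' ha.ne', log_mul hc.ne' hb.ne']
  ring

theorem symmetrizedEntropy_of_velocity_flip {J ι : Type*} [Fintype J] [Fintype ι]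
    {c : ℝ} (hc : 0 < c) {p q : ι → ℝ} (hp : ∀ k, 0 < p k) (hq : ∀ k, 0 < q k)
    (ρ : J × Bool × ι → ℝ)
    (hρ : ∀ j v k, ρ (j, v, k) = c * if v = true then p k else q k)
    (star : J × Bool × ι → J × Bool × ι) (hstar : ∀ j v k, star (j, v, k) = (j, !v, k)) :
    symmetrizedEntropy star ρ =
      -(Fintype.card J * c * ∑ k, (p k + q k) * (log c + (log (p k) + log (q k)) / 2)) := by
  have pointwise : ∀ j k,
      ρ (j, true, k) * log (sqrt (ρ (j, true, k) * ρ (star (j, true, k)))) +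
        ρ (j, false, k) * log (sqrt (ρ (j, false, k) * ρ (star (j, false, k)))) =
      c * ((p k + q k) * (log c + (log (p k) + log (q k)) / 2)) := by
    intro j k
    simp only [hstar, hρ, Bool.not_true, Bool.not_false, if_true, Bool.false_eq_true, if_false]
    rw [mul_comm (c * q k) (c * p k), log_sqrt_mul_mul hc (hp k) (hq k)]
    ring
  simp only [symmetrizedEntropy, Fintype.sum_prod_type, Fintype.sum_bool, ← sum_add_distrib,
    pointwise, ← mul_sum, sum_const, card_univ, nsmul_eq_mul]
  ring

end ToyModel

end

open ToyModel in
/-- Symmetrized Shannon entropy of the stationary distribution of the toy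
heat-conduction model. -/
theorem toy_model_symmetrized_shannon_entropy (L n : ℕ) (hL : 2 ≤ L) (hn : 1 ≤ n)
    (u : Fin n → ℝ) (β₁ β₂ : ℝ)
    (Z uavg : ℝ → ℝ) (hZ : ∀ β, Z β = ∑ k : Fin n, Real.exp (-β * u k))
    (huavg : ∀ β, uavg β = (∑ k : Fin n, u k * Real.exp (-β * u k)) / Z β)
    (ρ : (Fin L × Bool × Fin n) → ℝ)
    (hρ : ∀ (j : Fin L) (v : Bool) (k : Fin n),
      ρ (j, v, k) = (1 / (2 * L)) *
        (if v = true then Real.exp (-β₁ * u k) / Z β₁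
         else Real.exp (-β₂ * u k) / Z β₂))
    (star : (Fin L × Bool × Fin n) → (Fin L × Bool × Fin n))
    (hstar : ∀ (j : Fin L) (v : Bool) (k : Fin n), star (j, v, k) = (j, !v, k)) :
    -∑ x, ρ x * Real.log (Real.sqrt (ρ x * ρ (star x)))
      = ((β₁ + β₂) / 2) * ((uavg β₁ + uavg β₂) / 2)
        + (Real.log (Z β₁) + Real.log (Z β₂)) / 2 + Real.log (2 * L) := by
  obtain rfl : Z = partitionFunction u := funext hZ
  obtain rfl : uavg = meanEnergy u := funext huavg
  have : Nonempty (Fin n) := ⟨⟨0, hn⟩⟩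
  have hc : (0 : ℝ) < 1 / (2 * L) := by
    have : (0 : ℝ) < L := by exact_mod_cast (by omega : 0 < L)
    positivity
  have log_affine : ∀ k, log (1 / (2 * L)) + (log (gibbs u β₁ k) + log (gibbs u β₂ k)) / 2 =
      (-log (2 * L) - (log (partitionFunction u β₁) + log (partitionFunction u β₂)) / 2) +
        -((β₁ + β₂) / 2) * u k := by
    intro k
    rw [log_gibbs, log_gibbs, one_div, log_inv]
    ring
  change symmetrizedEntropy star ρ = _
  rw [symmetrizedEntropy_of_velocity_flip hc (gibbs_pos u β₁) (gibbs_pos u β₂) ρ hρ star hstar]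
  simp only [log_affine, add_mul, sum_add_distrib, sum_gibbs_mul_affine, Fintype.card_fin]
  field_simp
  ring
end
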